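/- Let V ⊂ ℝ² be a bounded open set whose closure contains a distinguished point Q, with dist(V, {r = 0}) > 0 so that A ≤ r^{-1} ≤ B on V for constants 0 < A ≤ B. Let G ⊂ V satisfy G_λ := Q + λ^{-1}(G - Q) ⊂ V for 0 < λ < 1, and define v_λ by v_λ(p) = v(Q + λ(p - Q)). Let ϑ(p) = |p - Q|. Then there are constants c, C > 0 depending only on A, B such that c λ^{a-1} ‖v‖_{K^m_{a,1}(G)} ≤ ‖v_λ‖_{K^m_{a,1}(G_λ)} ≤ C λ^{a-1} ‖v‖_{K^m_{a,1}(G)} for all integers m ≥ 0 and reals a, where ‖v‖²_{K^m_{a,1}(D)} = Σ_{|α| ≤ m} ∫_D ϑ^{2(|α|-a)} (∂^α v)² r dr dz. -/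

import Mathlib

open MeasureTheory

noncomputable section

abbrev P2 := ℝ × ℝ

def pdr (f : P2 → ℝ) : P2 → ℝ := fun p => fderiv ℝ f p (1, 0)
def pdz (f : P2 → ℝ) : P2 → ℝ := fun p => fderiv ℝ f p (0, 1)

def D2 (α : ℕ × ℕ) (f : P2 → ℝ) : P2 → ℝ := pdr^[α.1] (pdz^[α.2] f)

def wt2 (α : ℕ × ℕ) : ℕ := α.1 + α.2

def idx2 (m : ℕ) : Finset (ℕ × ℕ) :=
  ((Finset.range (m+1)) ×ˢ (Finset.range (m+1))).filter fun α => wt2 α ≤ m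

/-- ϑ(p) = |p - Q|. -/
def thQ (Q p : P2) : ℝ := Real.sqrt ((p.1 - Q.1) ^ 2 + (p.2 - Q.2) ^ 2)

/-- ‖v‖²_{K^m_{a,1}(D)} = Σ_{|α|≤m} ∫_D ϑ^{2(|α|-a)} (∂^α v)² r dr dz, ϑ = dist to Q. -/
def KQ (Q : P2) (D : Set P2) (m : ℕ) (a : ℝ) (v : P2 → ℝ) : ℝ :=
  ∑ α ∈ idx2 m, ∫ p in D, thQ Q p ^ (2 * ((wt2 α : ℝ) - a)) * (D2 α v p) ^ 2 * p.1

/-!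
Write `h_c` for the homothety of ratio `c` centred at `Q`. Since `h_λ` is affine with linear part
`λ • id`, every derivative of order `|α|` of `v ∘ h_λ` picks up a factor `λ ^ |α|`, the weight `ϑ`
scales by `λ`, and the Jacobian of `h_{λ⁻¹}` is `λ⁻²`. Substituting `p = h_{λ⁻¹} q` therefore
turns `‖v_λ‖²` on `G_λ` into `λ ^ (2a - 2)` times the same integral over `G`, except that the
measure weight `r` is evaluated at `h_{λ⁻¹} q` instead of `q`. Both points lie in `V`, where
`r ∈ [B⁻¹, A⁻¹]`, so the two weights are comparable with constants `A / B` and `B / A`.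
-/

open Set Module

section DirDeriv

variable {𝕜 E F : Type*} [NontriviallyNormedField 𝕜] [NormedAddCommGroup E] [NormedSpace 𝕜 E]
  [NormedAddCommGroup F] [NormedSpace 𝕜 F]

variable (𝕜) in
def dirDeriv (u : E) (f : E → F) : E → F :=
  fun p => fderiv 𝕜 f p u

theorem dirDeriv_const_smul (u : E) (c : 𝕜) (f : E → F) :
    dirDeriv 𝕜 u (c • f) = c • dirDeriv 𝕜 u f := by
  funext p
  simp [dirDeriv, fderiv_const_smul_field]

theorem iterate_dirDeriv_const_smul (u : E) (c : 𝕜) (f : E → F) (n : ℕ) :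
    (dirDeriv 𝕜 u)^[n] (c • f) = c • (dirDeriv 𝕜 u)^[n] f := by
  induction n with
  | zero => rfl
  | succ n ih => rw [Function.iterate_succ_apply', Function.iterate_succ_apply', ih,
      dirDeriv_const_smul]

theorem fderiv_comp_homothety (f : E → F) (Q : E) (c : 𝕜) (p : E) :
    fderiv 𝕜 (fun x => f (AffineMap.homothety Q c x)) p
      = c • fderiv 𝕜 f (AffineMap.homothety Q c p) := by
  simp only [AffineMap.homothety_apply, vsub_eq_sub, vadd_eq_add]
  rw [fderiv_comp_sub (f := fun y => f (c • y + Q)), fderiv_comp_smul (f := fun y => f (y + Q)),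
    fderiv_comp_add_right]

theorem dirDeriv_comp_homothety (u : E) (f : E → F) (Q : E) (c : 𝕜) :
    dirDeriv 𝕜 u (fun x => f (AffineMap.homothety Q c x))
      = c • fun x => dirDeriv 𝕜 u f (AffineMap.homothety Q c x) := by
  funext p
  simp [dirDeriv, fderiv_comp_homothety]

theorem iterate_dirDeriv_comp_homothety (u : E) (f : E → F) (Q : E) (c : 𝕜) (n : ℕ) :
    (dirDeriv 𝕜 u)^[n] (fun x => f (AffineMap.homothety Q c x))
      = c ^ n • fun x => (dirDeriv 𝕜 u)^[n] f (AffineMap.homothety Q c x) := by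
  induction n with
  | zero => simp
  | succ n ih =>
    rw [Function.iterate_succ_apply', ih, dirDeriv_const_smul, dirDeriv_comp_homothety,
      smul_smul, pow_succ, Function.iterate_succ_apply']

end DirDeriv

theorem setIntegral_image_homothety {E F : Type*} [NormedAddCommGroup E] [NormedSpace ℝ E]
    [FiniteDimensional ℝ E] [MeasurableSpace E] [BorelSpace E] (μ : Measure E)
    [μ.IsAddHaarMeasure] [NormedAddCommGroup F] [NormedSpace ℝ F] (Q : E) {c : ℝ} (hc : c ≠ 0)
    {s : Set E} (hs : MeasurableSet s) (φ : E → F) :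
    ∫ p in AffineMap.homothety Q c '' s, φ p ∂μ
      = |c| ^ finrank ℝ E • ∫ q in s, φ (AffineMap.homothety Q c q) ∂μ := by
  have hderiv (x : E) : HasFDerivWithinAt (AffineMap.homothety Q c)
      (c • ContinuousLinearMap.id ℝ E) s x := by
    have hform : ⇑(AffineMap.homothety Q c) = fun y => c • (y - Q) + Q := by
      funext y
      simp [AffineMap.homothety_apply]
    rw [hform]
    exact (((hasFDerivAt_id x).sub_const Q).const_smul c).add_const Q |>.hasFDerivWithinAt
  have hdet : (c • ContinuousLinearMap.id ℝ E).det = c ^ finrank ℝ E := by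
    rw [ContinuousLinearMap.det, ContinuousLinearMap.toLinearMap_smul, ContinuousLinearMap.coe_id,
      LinearMap.det_smul, LinearMap.det_id, mul_one]
  rw [integral_image_eq_integral_abs_det_fderiv_smul μ hs (fun x _ => hderiv x)
    ((AffineMap.homothety_injective Q hc).injOn), hdet, abs_pow, integral_smul]

theorem homothety_apply_prod (Q p : P2) (c : ℝ) :
    AffineMap.homothety Q c p = (Q.1 + c * (p.1 - Q.1), Q.2 + c * (p.2 - Q.2)) := by
  ext <;> simp [AffineMap.homothety_apply, add_comm]

theorem thQ_homothety (Q p : P2) (c : ℝ) :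
    thQ Q (AffineMap.homothety Q c p) = |c| * thQ Q p := by
  rw [thQ, thQ, homothety_apply_prod, ← Real.sqrt_sq_eq_abs, ← Real.sqrt_mul (sq_nonneg c)]
  congr 1
  ring

theorem D2_comp_homothety (α : ℕ × ℕ) (v : P2 → ℝ) (Q : P2) (c : ℝ) :
    D2 α (fun p => v (AffineMap.homothety Q c p))
      = c ^ wt2 α • fun p => D2 α v (AffineMap.homothety Q c p) := by
  change (dirDeriv ℝ ((1, 0) : P2))^[α.1] ((dirDeriv ℝ ((0, 1) : P2))^[α.2] _) = _
  rw [iterate_dirDeriv_comp_homothety, iterate_dirDeriv_const_smul,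
    iterate_dirDeriv_comp_homothety, smul_smul, wt2, pow_add, mul_comm]
  rfl

theorem Measurable.iterate_dirDeriv {f : P2 → ℝ} (hf : Measurable f) (u : P2) (n : ℕ) :
    Measurable ((dirDeriv ℝ u)^[n] f) := by
  cases n with
  | zero => exact hf
  | succ n =>
    rw [Function.iterate_succ_apply']
    exact measurable_fderiv_apply_const ℝ _ u

theorem Measurable.D2 {v : P2 → ℝ} (hv : Measurable v) (α : ℕ × ℕ) : Measurable (D2 α v) :=
  (hv.iterate_dirDeriv _ _).iterate_dirDeriv _ _

theorem thQ_nonneg (Q p : P2) : 0 ≤ thQ Q p :=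
  Real.sqrt_nonneg _

def weightedKQ (Q : P2) (D : Set P2) (m : ℕ) (a : ℝ) (v w : P2 → ℝ) : ℝ :=
  ∑ α ∈ idx2 m, ∫ p in D, thQ Q p ^ (2 * ((wt2 α : ℝ) - a)) * (D2 α v p) ^ 2 * w p

theorem KQ_eq_weightedKQ (Q : P2) (D : Set P2) (m : ℕ) (a : ℝ) (v : P2 → ℝ) :
    KQ Q D m a v = weightedKQ Q D m a v Prod.fst :=
  rfl

-- The Jacobian of `h_{λ⁻¹}`, the rescaling of `ϑ ^ (2 (k - a))`, and that of `(∂^α v)²`.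
theorem dilation_factor {lam : ℝ} (hlam : 0 < lam) (k : ℕ) (a : ℝ) :
    |lam⁻¹| ^ 2 * |lam⁻¹| ^ (2 * ((k : ℝ) - a)) * (lam ^ k) ^ 2 = lam ^ (2 * a - 2) := by
  rw [abs_inv, abs_of_pos hlam, inv_pow, Real.inv_rpow hlam.le, ← pow_mul, ← Real.rpow_natCast,
    ← Real.rpow_natCast, ← Real.rpow_neg hlam.le, ← Real.rpow_neg hlam.le,
    ← Real.rpow_add hlam, ← Real.rpow_add hlam]
  congr 1
  push_cast
  ring

theorem weightedKQ_image_homothety (Q : P2) (m : ℕ) (a : ℝ) {lam : ℝ} (hlam : 0 < lam)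
    {G : Set P2} (hG : MeasurableSet G) (v w : P2 → ℝ) :
    weightedKQ Q (AffineMap.homothety Q lam⁻¹ '' G) m a
        (fun p => v (AffineMap.homothety Q lam p)) w
      = lam ^ (2 * a - 2) * weightedKQ Q G m a v (fun q => w (AffineMap.homothety Q lam⁻¹ q)) := by
  rw [weightedKQ, weightedKQ, Finset.mul_sum]
  refine Finset.sum_congr rfl fun α _ => ?_
  rw [setIntegral_image_homothety volume Q (inv_ne_zero hlam.ne') hG, ← integral_const_mul,
    smul_eq_mul, ← integral_const_mul]
  congr 1
  funext q
  have hinv : AffineMap.homothety Q lam (AffineMap.homothety Q lam⁻¹ q) = q := by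
    rw [← AffineMap.homothety_mul_apply, mul_inv_cancel₀ hlam.ne', AffineMap.homothety_one]
    rfl
  simp only [D2_comp_homothety, Pi.smul_apply, smul_eq_mul, hinv, thQ_homothety,
    Module.finrank_prod, Module.finrank_self]
  rw [Real.mul_rpow (abs_nonneg _) (thQ_nonneg Q q), ← dilation_factor hlam (wt2 α) a]
  ring

theorem integral_sandwich {X : Type*} [MeasurableSpace X] {μ : Measure X} {f g : X → ℝ}
    (hf : AEStronglyMeasurable f μ) (hg : AEStronglyMeasurable g μ) (hf0 : 0 ≤ᵐ[μ] f)
    {c C : ℝ} (hc : 0 < c) (hlow : ∀ᵐ x ∂μ, c * f x ≤ g x) (hup : ∀ᵐ x ∂μ, g x ≤ C * f x) :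
    c * ∫ x, f x ∂μ ≤ ∫ x, g x ∂μ ∧ ∫ x, g x ∂μ ≤ C * ∫ x, f x ∂μ := by
  by_cases hfi : Integrable f μ
  · have hgi : Integrable g μ := by
      refine (hfi.const_mul C).mono' hg ?_
      filter_upwards [hf0, hlow, hup] with x hfx hlowx hupx
      rw [Real.norm_eq_abs, abs_of_nonneg ((mul_nonneg hc.le hfx).trans hlowx)]
      exact hupx
    rw [← integral_const_mul, ← integral_const_mul]
    exact ⟨integral_mono_ae (hfi.const_mul c) hgi hlow,
      integral_mono_ae hgi (hfi.const_mul C) hup⟩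
  · have hgi : ¬ Integrable g μ := fun hgi => hfi <| (hgi.const_mul c⁻¹).mono' hf <| by
      filter_upwards [hf0, hlow] with x hfx hlowx
      rw [Real.norm_eq_abs, abs_of_nonneg hfx, inv_mul_eq_div, le_div_iff₀ hc, mul_comm]
      exact hlowx
    simp [integral_undef hfi, integral_undef hgi]

theorem weightedKQ_comparable (Q : P2) (m : ℕ) (a : ℝ) {G : Set P2} (hG : MeasurableSet G)
    {v w₁ w₂ : P2 → ℝ} (hv : Measurable v) (hw₁ : Measurable w₁) (hw₂ : Measurable w₂)
    (hw₁0 : ∀ q ∈ G, 0 ≤ w₁ q) {c C : ℝ} (hc : 0 < c) (hlow : ∀ q ∈ G, c * w₁ q ≤ w₂ q)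
    (hup : ∀ q ∈ G, w₂ q ≤ C * w₁ q) :
    c * weightedKQ Q G m a v w₁ ≤ weightedKQ Q G m a v w₂ ∧
      weightedKQ Q G m a v w₂ ≤ C * weightedKQ Q G m a v w₁ := by
  let φ (α : ℕ × ℕ) (q : P2) : ℝ := thQ Q q ^ (2 * ((wt2 α : ℝ) - a)) * (D2 α v q) ^ 2
  have hα (α : ℕ × ℕ) : c * ∫ q in G, φ α q * w₁ q ≤ ∫ q in G, φ α q * w₂ q ∧
      ∫ q in G, φ α q * w₂ q ≤ C * ∫ q in G, φ α q * w₁ q := by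
    have hφ : Measurable (φ α) := by
      have := hv.D2 α
      unfold φ thQ
      fun_prop
    have hφ0 (q : P2) : 0 ≤ φ α q :=
      mul_nonneg (Real.rpow_nonneg (thQ_nonneg Q q) _) (sq_nonneg _)
    refine integral_sandwich (hφ.mul hw₁).aestronglyMeasurable (hφ.mul hw₂).aestronglyMeasurable
      (ae_restrict_of_forall_mem hG fun q hq => mul_nonneg (hφ0 q) (hw₁0 q hq)) hc
      (ae_restrict_of_forall_mem hG fun q hq => ?_) (ae_restrict_of_forall_mem hG fun q hq => ?_)
    · simpa only [Pi.mul_apply, mul_left_comm c] using mul_le_mul_of_nonneg_left (hlow q hq) (hφ0 q)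
    · simpa only [Pi.mul_apply, mul_left_comm C] using mul_le_mul_of_nonneg_left (hup q hq) (hφ0 q)
  simp only [weightedKQ, Finset.mul_sum]
  exact ⟨Finset.sum_le_sum fun α _ => (hα α).1, Finset.sum_le_sum fun α _ => (hα α).2⟩

theorem div_mul_le_and_le_div_mul {A B x y : ℝ} (hA : 0 < A) (hx : x⁻¹ ∈ Icc A B)
    (hy : y⁻¹ ∈ Icc A B) : A / B * x ≤ y ∧ y ≤ B / A * x := by
  have hB : 0 < B := hA.trans_le (hx.1.trans hx.2)
  have hx0 : 0 < x := inv_pos.1 (hA.trans_le hx.1)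
  have hy0 : 0 < y := inv_pos.1 (hA.trans_le hy.1)
  have upper {z : ℝ} (hz0 : 0 < z) (hz : z⁻¹ ∈ Icc A B) : z ≤ A⁻¹ := (le_inv_comm₀ hA hz0).1 hz.1
  have lower {z : ℝ} (hz0 : 0 < z) (hz : z⁻¹ ∈ Icc A B) : B⁻¹ ≤ z := (inv_le_comm₀ hz0 hB).1 hz.2
  constructor
  · calc A / B * x ≤ A / B * A⁻¹ := by gcongr; exact upper hx0 hx
      _ = B⁻¹ := by field_simp
      _ ≤ y := lower hy0 hy
  · calc y ≤ A⁻¹ := upper hy0 hy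
      _ = B / A * B⁻¹ := by field_simp
      _ ≤ B / A * x := by gcongr; exact lower hx0 hx

theorem sqrt_mul_mul_sqrt_le {c t K J : ℝ} (hc : 0 ≤ c) (ht : 0 ≤ t) (h : c * K ≤ J) :
    √c * t * √K ≤ √(t ^ 2 * J) := by
  rw [Real.sqrt_mul (sq_nonneg t), Real.sqrt_sq ht, mul_right_comm, ← Real.sqrt_mul hc, mul_comm]
  gcongr

theorem sqrt_le_sqrt_mul_mul_sqrt {C t K J : ℝ} (hC : 0 ≤ C) (ht : 0 ≤ t) (h : J ≤ C * K) :
    √(t ^ 2 * J) ≤ √C * t * √K := by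
  rw [Real.sqrt_mul (sq_nonneg t), Real.sqrt_sq ht, mul_right_comm, ← Real.sqrt_mul hC, mul_comm]
  gcongr

theorem stmt_9_general (V : Set P2) (Q : P2)
    (A B : ℝ) (hA : 0 < A) (hAB : A ≤ B)
    (hr : ∀ p ∈ V, A ≤ (p.1)⁻¹ ∧ (p.1)⁻¹ ≤ B) :
    ∃ c > 0, ∃ C > 0, ∀ (m : ℕ) (a : ℝ) (lam : ℝ), 0 < lam → lam < 1 →
      ∀ G ⊆ V, MeasurableSet G →
        (fun p : P2 => (Q.1 + lam⁻¹ * (p.1 - Q.1), Q.2 + lam⁻¹ * (p.2 - Q.2))) '' G ⊆ V →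
        ∀ v : P2 → ℝ, ContDiff ℝ (⊤ : ℕ∞) v →
          c * lam ^ (a - 1) * Real.sqrt (KQ Q G m a v)
              ≤ Real.sqrt (KQ Q
                  ((fun p : P2 =>
                    (Q.1 + lam⁻¹ * (p.1 - Q.1), Q.2 + lam⁻¹ * (p.2 - Q.2))) '' G) m a
                  (fun p => v (Q.1 + lam * (p.1 - Q.1), Q.2 + lam * (p.2 - Q.2)))) ∧
            Real.sqrt (KQ Q
                ((fun p : P2 =>
                  (Q.1 + lam⁻¹ * (p.1 - Q.1), Q.2 + lam⁻¹ * (p.2 - Q.2))) '' G) m a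
                (fun p => v (Q.1 + lam * (p.1 - Q.1), Q.2 + lam * (p.2 - Q.2))))
              ≤ C * lam ^ (a - 1) * Real.sqrt (KQ Q G m a v) := by
  have hB : 0 < B := hA.trans_le hAB
  refine ⟨√(A / B), by positivity, √(B / A), by positivity,
    fun m a lam hlam _ G hGV hG hGimg v hv => ?_⟩
  simp only [← homothety_apply_prod] at hGimg ⊢
  have hK : KQ Q (AffineMap.homothety Q lam⁻¹ '' G) m a
        (fun p => v (AffineMap.homothety Q lam p))
      = (lam ^ (a - 1)) ^ 2 *
          weightedKQ Q G m a v (fun q => (AffineMap.homothety Q lam⁻¹ q).1) := by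
    rw [KQ_eq_weightedKQ, weightedKQ_image_homothety Q m a hlam hG, ← Real.rpow_natCast,
      ← Real.rpow_mul hlam.le]
    ring_nf
  have hweights (q : P2) (hq : q ∈ G) : A / B * q.1 ≤ (AffineMap.homothety Q lam⁻¹ q).1 ∧
      (AffineMap.homothety Q lam⁻¹ q).1 ≤ B / A * q.1 :=
    div_mul_le_and_le_div_mul hA (hr q (hGV hq)) (hr _ (hGimg (mem_image_of_mem _ hq)))
  obtain ⟨hlow, hup⟩ := weightedKQ_comparable Q m a hG hv.continuous.measurable measurable_fst
    (AffineMap.homothety_continuous Q lam⁻¹).measurable.fst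
    (fun q hq => (inv_pos.1 (hA.trans_le (hr q (hGV hq)).1)).le) (div_pos hA hB)
    (fun q hq => (hweights q hq).1) (fun q hq => (hweights q hq).2)
  rw [hK, KQ_eq_weightedKQ]
  exact ⟨sqrt_mul_mul_sqrt_le (by positivity) (by positivity) hlow,
    sqrt_le_sqrt_mul_mul_sqrt (by positivity) (by positivity) hup⟩

/-- near a vertex Q away from the axis (A ≤ r⁻¹ ≤ B on V), the dilation
v_λ(p) = v(Q + λ(p-Q)) on G_λ = Q + λ⁻¹(G - Q) satisfies the two-sided comparison
c λ^{a-1} ‖v‖_{K^m_{a,1}(G)} ≤ ‖v_λ‖_{K^m_{a,1}(G_λ)} ≤ C λ^{a-1} ‖v‖_{K^m_{a,1}(G)},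
with c, C depending only on A, B. -/
theorem stmt_9 (V : Set P2) (hVo : IsOpen V) (hVb : Bornology.IsBounded V)
    (Q : P2) (hQ : Q ∈ closure V)
    (A B : ℝ) (hA : 0 < A) (hAB : A ≤ B)
    (hr : ∀ p ∈ V, A ≤ (p.1)⁻¹ ∧ (p.1)⁻¹ ≤ B) :
    ∃ c > 0, ∃ C > 0, ∀ (m : ℕ) (a : ℝ) (lam : ℝ), 0 < lam → lam < 1 →
      ∀ G ⊆ V, MeasurableSet G →
        (fun p : P2 => (Q.1 + lam⁻¹ * (p.1 - Q.1), Q.2 + lam⁻¹ * (p.2 - Q.2))) '' G ⊆ V →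
        ∀ v : P2 → ℝ, ContDiff ℝ (⊤ : ℕ∞) v →
          c * lam ^ (a - 1) * Real.sqrt (KQ Q G m a v)
              ≤ Real.sqrt (KQ Q
                  ((fun p : P2 =>
                    (Q.1 + lam⁻¹ * (p.1 - Q.1), Q.2 + lam⁻¹ * (p.2 - Q.2))) '' G) m a
                  (fun p => v (Q.1 + lam * (p.1 - Q.1), Q.2 + lam * (p.2 - Q.2)))) ∧
            Real.sqrt (KQ Q
                ((fun p : P2 =>
                  (Q.1 + lam⁻¹ * (p.1 - Q.1), Q.2 + lam⁻¹ * (p.2 - Q.2))) '' G) m a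
                (fun p => v (Q.1 + lam * (p.1 - Q.1), Q.2 + lam * (p.2 - Q.2))))
              ≤ C * lam ^ (a - 1) * Real.sqrt (KQ Q G m a v) :=
  stmt_9_general V Q A B hA hAB hr
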